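/- arXiv:1001.1060 — 8 statements merged into one kernel-verified Lean document; each statement's English description precedes it below -/
import Mathlib

section
/- Let Ω ⊆ ℂ be a nonempty open connected set and u : ℂ → ℝ a roof function on Ω (harmonic and positive on Ω, continuously differentiable on the closure of Ω, vanishing on ∂Ω, with gradient of norm 1 on ∂Ω). Assume moreover that the partial derivative of u in the first real coordinate satisfies ∂u/∂x > 0 at every point of Ω, and that there exists a holomorphic bijection Ψ from the right half-plane ℂ⁺ = {z ∈ ℂ : Re z > 0} onto Ω which extends to a continuous map from the closed half-plane onto the closure of Ω sending the imaginary axis into ∂Ω. Then Ω is an open half-plane: there exist a ∈ ℂ with |a| = 1 and c ∈ ℝ such that Ω = {z ∈ ℂ : Re(a·z) + c > 0}. -/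
open Real

/-- A function `u : ℂ → ℝ` is harmonic on a set `Ω`: twice continuously
differentiable on `Ω` with vanishing Laplacian there. -/
def HarmonicOnSet (u : ℂ → ℝ) (Ω : Set ℂ) : Prop :=
  ContDiffOn ℝ 2 u Ω ∧
  ∀ z ∈ Ω,
    fderiv ℝ (fun w => fderiv ℝ u w 1) z 1 +
      fderiv ℝ (fun w => fderiv ℝ u w Complex.I) z Complex.I = 0

/-- `u` is a roof function on `Ω`: harmonic and positive on `Ω`, `C¹` on the
closure, vanishing on the frontier, with gradient of norm `1` on the frontier. -/
def IsRoofFunction (Ω : Set ℂ) (u : ℂ → ℝ) : Prop :=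
  HarmonicOnSet u Ω ∧
  (∀ z ∈ Ω, 0 < u z) ∧
  ContDiffOn ℝ 1 u (closure Ω) ∧
  (∀ z ∈ frontier Ω, u z = 0) ∧
  (∀ z ∈ frontier Ω, ‖fderiv ℝ u z‖ = 1)

/-!
Let `q = (∂ₓu - i ∂ᵧu) ∘ Ψ`, the conjugate gradient of `u` pulled back to the right half-plane.
It is holomorphic because `u` is harmonic, has `Re q ≥ 0` because `∂ₓu > 0`, and `‖q‖ = 1` on the
imaginary axis because `‖∇u‖ = 1` on `∂Ω`. Its Cayley transform `(q - 1) / (q + 1)` is bounded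
with real part `(‖q‖² - 1) / ‖q + 1‖²`, which vanishes on the axis; Phragmén–Lindelöf applied to
`exp (±(q - 1) / (q + 1))` makes it vanish everywhere, so `‖q‖ ≡ 1` and `q` is a constant `a` by
the maximum modulus principle. Thus `u = Re (a z) + c` on the connected set `Ω`, and since `u`
vanishes on `∂Ω`, the half-plane `{Re (a z) + c > 0}` cannot cross `∂Ω`, so it equals `Ω`.

On `∂Ω`, `∇u` is taken as the limit from inside `Ω` (`extendFrom`): `fderiv ℝ u` at a frontier
point only agrees with it where `closure Ω` has unique derivatives, e.g. where an interior ball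
touches `∂Ω`, and such points are dense in `∂Ω`.
-/

open Complex ComplexConjugate Topology Filter Set Metric InnerProductSpace

section ExtendFrom

variable {E F : Type*} [NormedAddCommGroup E] [NormedSpace ℝ E]
  [NormedAddCommGroup F] [NormedSpace ℝ F] {Ω : Set E} {u : E → F}

theorem exists_tendsto_fderiv_hasFDerivWithinAt_closure (hΩ : IsOpen Ω)
    (hu : ContDiffOn ℝ 1 u (closure Ω)) {w : E} (hw : w ∈ closure Ω) :
    ∃ L, Tendsto (fderiv ℝ u) (𝓝[Ω] w) (𝓝 L) ∧ HasFDerivWithinAt u L (closure Ω) w := by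
  obtain ⟨t, ht, -, f', hf', hf'w⟩ :=
    (contDiffWithinAt_succ_iff_hasFDerivWithinAt (n := 0) (by simp)).1 (by simpa using hu w hw)
  rw [insert_eq_of_mem hw] at ht
  obtain ⟨v, hv, hwv, hvt⟩ := mem_nhdsWithin.1 ht
  have hΩvt : Ω ∩ v ⊆ t := fun y hy => hvt ⟨hy.2, subset_closure hy.1⟩
  have hfderiv : EqOn (fderiv ℝ u) f' (Ω ∩ v) := fun y hy =>
    ((hf' y (hΩvt hy)).hasFDerivAt
      (mem_of_superset ((hΩ.inter hv).mem_nhds hy) hΩvt)).fderiv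
  refine ⟨f' w, ?_, (hf' w (mem_of_mem_nhdsWithin hw ht)).mono_of_mem_nhdsWithin ht⟩
  rw [nhdsWithin_restrict' Ω (hv.mem_nhds hwv)]
  exact (hf'w.continuousWithinAt.mono hΩvt).congr' (eventuallyEq_nhdsWithin_of_eqOn hfderiv).symm

theorem continuousOn_extendFrom_fderiv (hΩ : IsOpen Ω) (hu : ContDiffOn ℝ 1 u (closure Ω)) :
    ContinuousOn (extendFrom Ω (fderiv ℝ u)) (closure Ω) :=
  continuousOn_extendFrom subset_rfl fun _ hw =>
    (exists_tendsto_fderiv_hasFDerivWithinAt_closure hΩ hu hw).imp fun _ h => h.1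

theorem hasFDerivWithinAt_extendFrom_fderiv (hΩ : IsOpen Ω) (hu : ContDiffOn ℝ 1 u (closure Ω))
    {w : E} (hw : w ∈ closure Ω) :
    HasFDerivWithinAt u (extendFrom Ω (fderiv ℝ u) w) (closure Ω) w := by
  obtain ⟨L, hL, hLu⟩ := exists_tendsto_fderiv_hasFDerivWithinAt_closure hΩ hu hw
  have := mem_closure_iff_nhdsWithin_neBot.1 hw
  rwa [tendsto_nhds_unique (tendsto_extendFrom ⟨L, hL⟩) hL]

theorem extendFrom_fderiv_eqOn (hΩ : IsOpen Ω) (hu : ContDiffOn ℝ 1 u (closure Ω)) :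
    EqOn (extendFrom Ω (fderiv ℝ u)) (fderiv ℝ u) Ω :=
  extendFrom_extends ((hu.mono subset_closure).continuousOn_fderiv_of_isOpen hΩ le_rfl)

theorem extendFrom_fderiv_mem_of_isClosed (hΩ : IsOpen Ω) (hu : ContDiffOn ℝ 1 u (closure Ω))
    {K : Set (E →L[ℝ] F)} (hK : IsClosed K) (h : ∀ z ∈ Ω, fderiv ℝ u z ∈ K) {w : E}
    (hw : w ∈ closure Ω) : extendFrom Ω (fderiv ℝ u) w ∈ K := by
  refine hK.closure_subset_iff.2 ?_
    ((continuousOn_extendFrom_fderiv hΩ hu w hw).mono subset_closure |>.mem_closure_image hw)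
  rintro _ ⟨z, hz, rfl⟩
  rw [extendFrom_fderiv_eqOn hΩ hu hz]
  exact h z hz

theorem frontier_subset_closure_setOf_uniqueDiffWithinAt [ProperSpace E] (hΩ : IsOpen Ω) :
    frontier Ω ⊆ closure {w ∈ frontier Ω | UniqueDiffWithinAt ℝ (closure Ω) w} := by
  intro w hw
  have hwΩ : w ∉ Ω := fun h => hw.2 (hΩ.interior_eq.symm ▸ h)
  refine Metric.mem_closure_iff.2 fun ε hε => ?_
  obtain ⟨x, hxΩ, hwx⟩ := Metric.mem_closure_iff.1 hw.1 (ε / 2) (half_pos hε)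
  -- a point `w'` of `Ωᶜ` nearest to `x` is touched by the ball `ball x ρ ⊆ Ω`
  obtain ⟨w', hw'Ω, hxw'⟩ := hΩ.isClosed_compl.exists_infDist_eq_dist ⟨w, hwΩ⟩ x
  set ρ := infDist x Ωᶜ
  have hρ : 0 < ρ :=
    (hΩ.isClosed_compl.notMem_iff_infDist_pos ⟨w, hwΩ⟩).1 (not_not_intro hxΩ)
  have hball : closedBall x ρ ⊆ closure Ω := by
    rw [← closure_ball x hρ.ne']
    exact closure_mono ball_infDist_compl_subset
  have hw' : w' ∈ closedBall x ρ := by rw [mem_closedBall, dist_comm, hxw']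
  refine ⟨w', ⟨hΩ.frontier_eq ▸ ⟨hball hw', hw'Ω⟩, ?_⟩, ?_⟩
  · refine (uniqueDiffOn_convex (convex_closedBall x ρ) ?_ w' hw').mono hball
    rw [interior_closedBall x hρ.ne']
    exact ⟨x, mem_ball_self hρ⟩
  · calc dist w w' ≤ dist w x + dist x w' := dist_triangle _ _ _
      _ ≤ dist w x + dist x w := by
        rw [← hxw']; gcongr; exact infDist_le_dist_of_mem hwΩ
      _ < ε := by rw [dist_comm x w]; linarith

theorem norm_extendFrom_fderiv_of_mem_frontier [ProperSpace E] (hΩ : IsOpen Ω)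
    (hu : ContDiffOn ℝ 1 u (closure Ω)) {c : ℝ} (hc : c ≠ 0)
    (hnorm : ∀ w ∈ frontier Ω, ‖fderiv ℝ u w‖ = c) :
    ∀ w ∈ frontier Ω, ‖extendFrom Ω (fderiv ℝ u) w‖ = c := by
  have hgood : EqOn (fun w => ‖extendFrom Ω (fderiv ℝ u) w‖) (fun _ => c)
      {w ∈ frontier Ω | UniqueDiffWithinAt ℝ (closure Ω) w} := by
    rintro w ⟨hwΩ, hwU⟩
    have hdiff : DifferentiableAt ℝ u w := by
      by_contra h
      exact hc (by simpa [fderiv_zero_of_not_differentiableAt h] using (hnorm w hwΩ).symm)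
    have := hwU.eq (hasFDerivWithinAt_extendFrom_fderiv hΩ hu (frontier_subset_closure hwΩ))
      hdiff.hasFDerivAt.hasFDerivWithinAt
    simp only [this, hnorm w hwΩ]
  exact hgood.of_subset_closure
    ((continuousOn_extendFrom_fderiv hΩ hu).norm.mono frontier_subset_closure) continuousOn_const
    (fun _ hw => hw.1) (frontier_subset_closure_setOf_uniqueDiffWithinAt hΩ)

end ExtendFrom

theorem conj_toDual_symm_eq (L : StrongDual ℝ ℂ) :
    conj ((toDual ℝ ℂ).symm L) = L 1 - I * L I := by
  have h (z : ℂ) : L z = (z * conj ((toDual ℝ ℂ).symm L)).re := by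
    rw [← Complex.inner, toDual_symm_apply]
  apply Complex.ext <;> simp [h]

theorem re_conj_toDual_symm_mul (L : StrongDual ℝ ℂ) (z : ℂ) :
    (conj ((toDual ℝ ℂ).symm L) * z).re = L z := by
  rw [mul_comm, ← Complex.inner, toDual_symm_apply]

theorem HarmonicOnSet.harmonicOnNhd {u : ℂ → ℝ} {Ω : Set ℂ} (hu : HarmonicOnSet u Ω)
    (hΩ : IsOpen Ω) : HarmonicOnNhd u Ω := by
  intro z hz
  refine ⟨hu.1.contDiffAt (hΩ.mem_nhds hz), ?_⟩
  filter_upwards [hΩ.mem_nhds hz] with y hy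
  have hd : DifferentiableAt ℝ (fderiv ℝ u) y :=
    ((hu.1.contDiffAt (hΩ.mem_nhds hy)).fderiv_right le_rfl).differentiableAt one_ne_zero
  have := hu.2 y hy
  rw [fderiv_clm_apply hd (differentiableAt_const _),
    fderiv_clm_apply hd (differentiableAt_const _)] at this
  simpa [laplacian_eq_iteratedFDeriv_complexPlane, iteratedFDeriv_two_apply] using this

theorem HarmonicOnSet.differentiableOn_conj_toDual_symm_fderiv {u : ℂ → ℝ} {Ω : Set ℂ}
    (hu : HarmonicOnSet u Ω) (hΩ : IsOpen Ω) :
    DifferentiableOn ℂ (fun z => conj ((toDual ℝ ℂ).symm (fderiv ℝ u z))) Ω := fun z hz => by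
  simp_rw [conj_toDual_symm_eq]
  exact (HarmonicAt.differentiableAt_complex_partial
    (hu.harmonicOnNhd hΩ z hz)).differentiableWithinAt

theorem re_cayley (q : ℂ) : ((q - 1) / (q + 1)).re = (‖q‖ ^ 2 - 1) / ‖q + 1‖ ^ 2 := by
  rw [div_re, ← add_div, Complex.sq_norm, Complex.sq_norm, normSq_apply, normSq_apply]
  congr 1
  simp only [sub_re, add_re, sub_im, add_im, one_re, one_im]
  ring

theorem norm_cayley_le_one {q : ℂ} (hq : 0 ≤ q.re) : ‖(q - 1) / (q + 1)‖ ≤ 1 := by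
  rw [norm_div]
  refine div_le_one_of_le₀ ?_ (norm_nonneg _)
  rw [← sq_le_sq₀ (norm_nonneg _) (norm_nonneg _), Complex.sq_norm, Complex.sq_norm,
    normSq_apply, normSq_apply]
  simp only [sub_re, add_re, sub_im, add_im, one_re, one_im]
  nlinarith

theorem re_nonpos_of_diffContOnCl_rightHalfPlane {g : ℂ → ℂ}
    (hg : DiffContOnCl ℂ g {z | 0 < z.re}) {C : ℝ} (hC : ∀ z : ℂ, 0 ≤ z.re → (g z).re ≤ C)
    (hbd : ∀ y : ℝ, (g (y * I)).re ≤ 0) {z : ℂ} (hz : 0 ≤ z.re) : (g z).re ≤ 0 := by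
  have hexp : ∀ z : ℂ, 0 ≤ z.re → ‖exp (g z)‖ ≤ Real.exp C := fun z hz => by
    rw [norm_exp]; exact Real.exp_le_exp.2 (hC z hz)
  have := PhragmenLindelof.right_half_plane_of_bounded_on_real (f := fun z => exp (g z)) (C := 1)
    ⟨hg.differentiableOn.cexp, hg.continuousOn.cexp⟩
    ⟨1, one_lt_two, 0, Asymptotics.IsBigO.of_bound (Real.exp C) ?_⟩
    ⟨Real.exp C, eventually_map.2 <| (eventually_ge_atTop 0).mono fun x hx => hexp x (by simpa)⟩
    (fun y => by rw [norm_exp, Real.exp_le_one_iff]; exact hbd y) hz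
  · rwa [norm_exp, Real.exp_le_one_iff] at this
  · rw [eventually_inf_principal]
    exact Eventually.of_forall fun z hz => by simpa using hexp z (le_of_lt hz)

theorem exists_norm_eq_one_eqOn_of_re_nonneg {q : ℂ → ℂ}
    (hd : DifferentiableOn ℂ q {z | 0 < z.re}) (hc : ContinuousOn q {z | 0 ≤ z.re})
    (hre : ∀ z : ℂ, 0 ≤ z.re → 0 ≤ (q z).re) (hbd : ∀ z : ℂ, z.re = 0 → ‖q z‖ = 1) :
    ∃ c : ℂ, ‖c‖ = 1 ∧ EqOn q (fun _ => c) {z | 0 < z.re} := by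
  have hden : ∀ z : ℂ, 0 ≤ z.re → q z + 1 ≠ 0 := fun z hz h => by
    have := congrArg re h; simp at this; linarith [hre z hz]
  set g : ℂ → ℂ := fun z => (q z - 1) / (q z + 1)
  have hg : DiffContOnCl ℂ g {z | 0 < z.re} := by
    refine ⟨(hd.sub_const 1).div (hd.add_const 1) fun z hz => hden z (le_of_lt hz), ?_⟩
    rw [closure_setOfPred_lt_re]
    exact (hc.sub continuousOn_const).div (hc.add continuousOn_const) hden
  have hgbd : ∀ z : ℂ, 0 ≤ z.re → |(g z).re| ≤ 1 := fun z hz =>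
    (abs_re_le_norm _).trans (norm_cayley_le_one (hre z hz))
  have hgaxis : ∀ y : ℝ, (g (y * I)).re = 0 := fun y => by
    simp [g, re_cayley, hbd (y * I) (by simp)]
  have hnorm : ∀ z : ℂ, 0 < z.re → ‖q z‖ = 1 := fun z hz => by
    have h₁ := re_nonpos_of_diffContOnCl_rightHalfPlane hg (fun z hz => (le_abs_self _).trans
      (hgbd z hz)) (fun y => (hgaxis y).le) hz.le
    have h₂ := re_nonpos_of_diffContOnCl_rightHalfPlane hg.neg (fun z hz => (neg_le_abs _).trans
      (hgbd z hz)) (fun y => by simp [hgaxis y]) hz.le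
    have hzero : (g z).re = 0 := le_antisymm h₁ (by simpa using h₂)
    rw [re_cayley, div_eq_zero_iff, sub_eq_zero,
      pow_eq_one_iff_of_nonneg (norm_nonneg _) two_ne_zero] at hzero
    exact hzero.resolve_right (by simpa using hden z hz.le)
  refine ⟨q 1, hnorm 1 (by simp),
    eqOn_of_isPreconnected_of_isMaxOn_norm (convex_halfSpace_re_gt 0).isPreconnected
      (isOpen_lt continuous_const continuous_re) hd (by simp) fun z hz => ?_⟩
  simp [hnorm z hz, hnorm 1 (by simp)]

theorem eq_setOf_pos_of_eqOn {X : Type*} [TopologicalSpace X] {Ω : Set X} {u f : X → ℝ}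
    (hΩ : IsOpen Ω) (hne : Ω.Nonempty) (hu : ContinuousOn u (closure Ω)) (hf : Continuous f)
    (hconn : IsPreconnected {x | 0 < f x}) (hpos : ∀ x ∈ Ω, 0 < u x)
    (hzero : ∀ x ∈ frontier Ω, u x = 0) (heq : EqOn u f Ω) : Ω = {x | 0 < f x} := by
  have heq' : EqOn u f (closure Ω) :=
    heq.of_subset_closure hu hf.continuousOn subset_closure subset_rfl
  have hsub : Ω ⊆ {x | 0 < f x} := fun x hx => show 0 < f x from heq hx ▸ hpos x hx
  refine (hconn.subset_of_closure_inter_subset hΩ ?_ fun x ⟨hxc, hxf⟩ => ?_).antisymm' hsub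
  · obtain ⟨x, hx⟩ := hne
    exact ⟨x, hsub hx, hx⟩
  · by_contra hxΩ
    have hx : x ∈ frontier Ω := by rw [hΩ.frontier_eq]; exact ⟨hxc, hxΩ⟩
    simp [← heq' hxc, hzero x hx] at hxf

theorem isPreconnected_setOf_pos_re_mul_add (a : ℂ) (c : ℝ) :
    IsPreconnected {z : ℂ | 0 < (a * z).re + c} := by
  have hlin : IsLinearMap ℝ fun z : ℂ => (a * z).re :=
    ⟨fun z w => by simp [mul_add], fun r z => by simp; ring⟩
  simpa only [neg_lt_iff_pos_add] using (convex_halfSpace_gt hlin (-c)).isPreconnected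

theorem exists_norm_eq_one_forall_fderiv_eq_re_mul {Ω : Set ℂ} {u : ℂ → ℝ} {Ψ : ℂ → ℂ}
    (hΩ : IsOpen Ω) (hharm : HarmonicOnSet u Ω) (hC1 : ContDiffOn ℝ 1 u (closure Ω))
    (hnorm : ∀ z ∈ frontier Ω, ‖fderiv ℝ u z‖ = 1) (hux : ∀ z ∈ Ω, 0 ≤ fderiv ℝ u z 1)
    (hΨholo : DifferentiableOn ℂ Ψ {z | 0 < z.re}) (hΨbij : BijOn Ψ {z | 0 < z.re} Ω)
    (hΨcont : ContinuousOn Ψ {z | 0 ≤ z.re}) (hΨcl : MapsTo Ψ {z | 0 ≤ z.re} (closure Ω))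
    (hΨbd : ∀ z : ℂ, z.re = 0 → Ψ z ∈ frontier Ω) :
    ∃ a : ℂ, ‖a‖ = 1 ∧ ∀ z ∈ Ω, fderiv ℝ u z = reCLM.comp (ContinuousLinearMap.mul ℝ ℂ a) := by
  have hFΩ := extendFrom_fderiv_eqOn hΩ hC1
  have hholo : DifferentiableOn ℂ
      (fun z => conj ((toDual ℝ ℂ).symm (extendFrom Ω (fderiv ℝ u) z))) Ω :=
    (hharm.differentiableOn_conj_toDual_symm_fderiv hΩ).congr fun z hz => by rw [hFΩ hz]
  obtain ⟨a, ha, hqa⟩ := exists_norm_eq_one_eqOn_of_re_nonneg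
    (q := fun ζ => conj ((toDual ℝ ℂ).symm (extendFrom Ω (fderiv ℝ u) (Ψ ζ))))
    (hholo.comp hΨholo hΨbij.mapsTo)
    ((continuous_conj.comp (toDual ℝ ℂ).symm.continuous).comp_continuousOn
      ((continuousOn_extendFrom_fderiv hΩ hC1).comp hΨcont hΨcl))
    (fun ζ hζ => by
      rw [← mul_one (conj _), re_conj_toDual_symm_mul]
      exact extendFrom_fderiv_mem_of_isClosed hΩ hC1
        (isClosed_le continuous_const (ContinuousLinearMap.apply ℝ ℝ (1 : ℂ)).continuous)
        hux (hΨcl hζ))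
    (fun ζ hζ => by
      simpa using norm_extendFrom_fderiv_of_mem_frontier hΩ hC1 one_ne_zero hnorm _ (hΨbd ζ hζ))
  refine ⟨a, ha, fun z hz => ?_⟩
  obtain ⟨ζ, hζ, rfl⟩ := hΨbij.surjOn hz
  ext v
  rw [← re_conj_toDual_symm_mul, ← hFΩ hz]
  exact congrArg (fun b => (b * v).re) (hqa hζ)

theorem bernstein_exceptional_domain_general
    (Ω : Set ℂ) (hopen : IsOpen Ω) (hconn : IsConnected Ω)
    (u : ℂ → ℝ) (hu : IsRoofFunction Ω u)
    (hux : ∀ z ∈ Ω, 0 < fderiv ℝ u z 1)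
    (Ψ : ℂ → ℂ)
    (hΨholo : DifferentiableOn ℂ Ψ {z : ℂ | 0 < z.re})
    (hΨbij : Set.BijOn Ψ {z : ℂ | 0 < z.re} Ω)
    (hΨcont : ContinuousOn Ψ {z : ℂ | 0 ≤ z.re})
    (hΨsurj : Ψ '' {z : ℂ | 0 ≤ z.re} = closure Ω)
    (hΨbd : ∀ z : ℂ, z.re = 0 → Ψ z ∈ frontier Ω) :
    ∃ (a : ℂ) (c : ℝ), ‖a‖ = 1 ∧ Ω = {z : ℂ | 0 < (a * z).re + c} := by
  obtain ⟨hharm, hpos, hC1, hzero, hnorm⟩ := hu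
  obtain ⟨a, ha, hgrad⟩ := exists_norm_eq_one_forall_fderiv_eq_re_mul hopen hharm hC1 hnorm
    (fun z hz => (hux z hz).le) hΨholo hΨbij hΨcont (hΨsurj ▸ mapsTo_image Ψ _) hΨbd
  obtain ⟨c, hc⟩ := hopen.exists_eq_add_of_fderiv_eq hconn.isPreconnected
    ((hC1.mono subset_closure).differentiableOn one_ne_zero)
    (reCLM.comp (ContinuousLinearMap.mul ℝ ℂ a)).differentiable.differentiableOn
    fun z hz => by rw [hgrad z hz, ContinuousLinearMap.fderiv]
  exact ⟨a, c, ha, eq_setOf_pos_of_eqOn hopen hconn.nonempty hC1.continuousOn (by fun_prop)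
    (isPreconnected_setOf_pos_re_mul_add a c) hpos hzero hc⟩

/-- Bernstein type result: an exceptional domain conformal to the right half
plane, whose roof function satisfies `∂u/∂x > 0`, is a half plane. -/
theorem bernstein_exceptional_domain
    (Ω : Set ℂ) (hne : Ω.Nonempty) (hopen : IsOpen Ω) (hconn : IsConnected Ω)
    (u : ℂ → ℝ) (hu : IsRoofFunction Ω u)
    (hux : ∀ z ∈ Ω, 0 < fderiv ℝ u z 1)
    (Ψ : ℂ → ℂ)
    (hΨholo : DifferentiableOn ℂ Ψ {z : ℂ | 0 < z.re})
    (hΨbij : Set.BijOn Ψ {z : ℂ | 0 < z.re} Ω)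
    (hΨcont : ContinuousOn Ψ {z : ℂ | 0 ≤ z.re})
    (hΨsurj : Ψ '' {z : ℂ | 0 ≤ z.re} = closure Ω)
    (hΨbd : ∀ z : ℂ, z.re = 0 → Ψ z ∈ frontier Ω) :
    ∃ (a : ℂ) (c : ℝ), ‖a‖ = 1 ∧ Ω = {z : ℂ | 0 < (a * z).re + c} :=
  bernstein_exceptional_domain_general Ω hopen hconn u hu hux Ψ hΨholo hΨbij hΨcont hΨsurj hΨbd
end

section
/- The map F(z) = z + sinh z is a conformal diffeomorphism from the strip S onto the domain Ω: F restricted to S is injective, its image F(S) equals Ω, F is holomorphic, and its derivative F'(z) = 1 + cosh z does not vanish at any point of S. -/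
/-!
On the strip `Re (1 + cosh z) = 1 + cosh x cos y > 0`, so `F` is injective there by the
Noshiro–Warschawski argument. Being entire and nonconstant, `F` is an open map, so `F(S)` is open.
Since `cos y ≥ 0`, `|Re z| ≤ |Re F(z)|`; hence `F(S) ⊆ Ω`, and `F` is proper on the closed strip,
so a limit point of `F(S)` is `F` of a point of the closed strip. The boundary lines
`|Im z| = π/2` go to `∂Ω`, so `F(S)` is relatively closed in the connected set `Ω`, and `F(S) = Ω`.
-/

open Real Complex Set Metric ComplexConjugate

namespace Complex

theorem sinh_re (z : ℂ) : (sinh z).re = Real.sinh z.re * Real.cos z.im := by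
  conv_lhs => rw [← re_add_im z, sinh_add, sinh_mul_I, cosh_mul_I]
  simp [sinh_ofReal_re, cos_ofReal_re, cosh_ofReal_re, sin_ofReal_re]

theorem sinh_im (z : ℂ) : (sinh z).im = Real.cosh z.re * Real.sin z.im := by
  conv_lhs => rw [← re_add_im z, sinh_add, sinh_mul_I, cosh_mul_I]
  simp [sinh_ofReal_re, cos_ofReal_re, cosh_ofReal_re, sin_ofReal_re]

theorem cosh_re (z : ℂ) : (cosh z).re = Real.cosh z.re * Real.cos z.im := by
  conv_lhs => rw [← re_add_im z, cosh_add, sinh_mul_I, cosh_mul_I]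
  simp [sinh_ofReal_re, cos_ofReal_re, cosh_ofReal_re, sin_ofReal_re]

end Complex

theorem Convex.injOn_of_hasDerivAt_of_re_pos {f f' : ℂ → ℂ} {s : Set ℂ} (hs : Convex ℝ s)
    (hf : ∀ z ∈ s, HasDerivAt f (f' z) z) (hf' : ∀ z ∈ s, 0 < (f' z).re) : InjOn f s := by
  intro z₁ h₁ z₂ h₂ heq
  by_contra hne
  set d := z₂ - z₁
  have hd : d ≠ 0 := sub_ne_zero.2 (Ne.symm hne)
  let g : ℝ → ℂ := fun t => z₁ + t • d
  have hg : ∀ t ∈ Icc (0 : ℝ) 1, g t ∈ s := fun t ht => hs.add_smul_sub_mem h₁ h₂ ht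
  -- `ψ t = ⟪f (g t), d⟫` has derivative `‖d‖² Re f'(g t) > 0` but `ψ 0 = ψ 1`
  let ψ : ℝ → ℝ := fun t => (conj d * f (g t)).re
  have hψ : ∀ t ∈ Icc (0 : ℝ) 1, HasDerivAt ψ (normSq d * (f' (g t)).re) t := by
    intro t ht
    have hg' : HasDerivAt g d t := by
      simpa [g] using ((hasDerivAt_id t).smul_const d).const_add z₁
    refine (reCLM.hasFDerivAt.comp_hasDerivAt t
      (((hf _ (hg t ht)).comp t hg').const_mul (conj d))).congr_deriv ?_
    simp only [reCLM_apply, mul_re, mul_im, conj_re, conj_im, normSq_apply]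
    ring
  obtain ⟨c, hc, hψc⟩ := exists_hasDerivAt_eq_zero zero_lt_one
    (fun t ht => (hψ t ht).continuousAt.continuousWithinAt)
    (by simp [ψ, g, d, heq]) (fun t ht => hψ t (Ioo_subset_Icc_self ht))
  exact (mul_pos (normSq_pos.2 hd) (hf' _ (hg c (Ioo_subset_Icc_self hc)))).ne' hψc

noncomputable def addSinh (z : ℂ) : ℂ := z + sinh z

def strip : Set ℂ := {z | |z.im| < π / 2}

def coshRegion : Set ℂ := {w | |w.im| < π / 2 + Real.cosh w.re}

theorem addSinh_re (z : ℂ) : (addSinh z).re = z.re + Real.sinh z.re * Real.cos z.im := by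
  simp [addSinh, sinh_re]

theorem addSinh_im (z : ℂ) : (addSinh z).im = z.im + Real.cosh z.re * Real.sin z.im := by
  simp [addSinh, sinh_im]

theorem hasDerivAt_addSinh (z : ℂ) : HasDerivAt addSinh (1 + cosh z) z :=
  (hasDerivAt_id z).add (hasDerivAt_sinh z)

theorem isOpenMap_addSinh : IsOpenMap addSinh := by
  refine (analyticOnNhd_id.add Complex.analyticOnNhd_sinh).is_constant_or_isOpenMap.resolve_left ?_
  rintro ⟨w, hw⟩
  have h1 : 0 < (addSinh 1).re := by
    rw [addSinh_re, one_re, one_im, Real.cos_zero, mul_one]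
    linarith [Real.sinh_pos_iff.2 one_pos]
  have h10 : addSinh 1 = addSinh 0 := (hw 1).trans (hw 0).symm
  rw [h10] at h1
  simp [addSinh] at h1

theorem isOpen_strip : IsOpen strip :=
  isOpen_lt continuous_im.abs continuous_const

theorem convex_strip : Convex ℝ strip := by
  simpa [strip, Set.preimage, abs_lt] using (convex_Ioo (-(π / 2)) (π / 2)).linear_preimage imLm

theorem re_one_add_cosh_pos {z : ℂ} (hz : z ∈ strip) : 0 < (1 + cosh z).re := by
  have hcos : 0 < Real.cos z.im := Real.cos_pos_of_mem_Ioo (abs_lt.1 hz)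
  rw [add_re, one_re, cosh_re]
  positivity

theorem injOn_addSinh_strip : InjOn addSinh strip :=
  convex_strip.injOn_of_hasDerivAt_of_re_pos (fun z _ => hasDerivAt_addSinh z)
    fun _ hz => re_one_add_cosh_pos hz

theorem abs_re_le_abs_re_addSinh {z : ℂ} (hz : |z.im| ≤ π / 2) : |z.re| ≤ |(addSinh z).re| := by
  have hcos : 0 ≤ Real.cos z.im := Real.cos_nonneg_of_mem_Icc (abs_le.1 hz)
  have hsinh : 0 ≤ z.re * Real.sinh z.re := by
    rcases le_total 0 z.re with hx | hx
    · exact mul_nonneg hx (Real.sinh_nonneg_iff.2 hx)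
    · exact mul_nonneg_of_nonpos_of_nonpos hx (Real.sinh_nonpos_iff.2 hx)
  rw [addSinh_re, ← sq_le_sq]
  nlinarith [mul_nonneg hsinh hcos]

theorem mapsTo_addSinh_strip : MapsTo addSinh strip coshRegion := by
  intro z hz
  have hcosh : Real.cosh z.re ≤ Real.cosh (addSinh z).re :=
    Real.cosh_le_cosh.2 (abs_re_le_abs_re_addSinh (le_of_lt hz))
  have hsin : Real.cosh z.re * |Real.sin z.im| ≤ Real.cosh z.re :=
    mul_le_of_le_one_right (Real.cosh_pos _).le (Real.abs_sin_le_one _)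
  calc |(addSinh z).im| ≤ |z.im| + |Real.cosh z.re * Real.sin z.im| :=
        addSinh_im z ▸ abs_add_le _ _
    _ = |z.im| + Real.cosh z.re * |Real.sin z.im| := by rw [abs_mul, abs_of_pos (Real.cosh_pos _)]
    _ < π / 2 + Real.cosh (addSinh z).re := by linarith [show |z.im| < π / 2 from hz]

theorem addSinh_notMem_coshRegion {z : ℂ} (hz : |z.im| = π / 2) : addSinh z ∉ coshRegion := by
  rcases abs_eq (by positivity) |>.1 hz with h | h <;>
  simp [coshRegion, addSinh_re, addSinh_im, h, abs_lt]

theorem isPreconnected_coshRegion : IsPreconnected coshRegion := by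
  refine isPreconnected_of_forall 0 fun w hw => ?_
  let vert : ℝ → ℂ := fun s => w.re + s * w.im * I
  have hvert : ∀ s ∈ Icc (0 : ℝ) 1, vert s ∈ coshRegion := by
    intro s hs
    have : |s * w.im| ≤ |w.im| := by
      rw [abs_mul, abs_of_nonneg hs.1]
      exact mul_le_of_le_one_left (abs_nonneg _) hs.2
    simpa [coshRegion, vert] using this.trans_lt hw
  refine ⟨range ofReal ∪ vert '' Icc 0 1, ?_, Or.inl ⟨0, ofReal_zero⟩,
    Or.inr ⟨1, ⟨zero_le_one, le_rfl⟩, by simp [vert]⟩, ?_⟩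
  · refine union_subset ?_ (image_subset_iff.2 hvert)
    rintro _ ⟨x, rfl⟩
    have : 0 < π / 2 + Real.cosh x := by positivity
    simpa [coshRegion] using this
  · exact (isPreconnected_range continuous_ofReal).union (w.re : ℂ) ⟨w.re, rfl⟩
      ⟨0, ⟨le_rfl, zero_le_one⟩, by simp [vert]⟩
      (isPreconnected_Icc.image vert (by fun_prop))

theorem continuous_addSinh : Continuous addSinh :=
  continuous_id.add continuous_sinh

theorem ball_inter_image_addSinh_strip_subset (w : ℂ) :
    ball w 1 ∩ addSinh '' strip ⊆
      addSinh '' (Icc (-(|w.re| + 1)) (|w.re| + 1) ×ℂ Icc (-(π / 2)) (π / 2)) := by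
  rintro _ ⟨hdist, z, hz, rfl⟩
  refine ⟨z, mem_reProdIm.2 ⟨abs_le.1 ?_, abs_le.1 (le_of_lt hz)⟩, rfl⟩
  have hre : |(addSinh z).re - w.re| < 1 :=
    (sub_re _ _ ▸ abs_re_le_norm _).trans_lt (mem_ball_iff_norm.1 hdist)
  linarith [abs_re_le_abs_re_addSinh (le_of_lt hz), abs_sub_abs_le_abs_sub (addSinh z).re w.re]

theorem closure_image_addSinh_strip_inter_subset :
    closure (addSinh '' strip) ∩ coshRegion ⊆ addSinh '' strip := by
  rintro w ⟨hcl, hw⟩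
  have hK : IsClosed (addSinh '' (Icc (-(|w.re| + 1)) (|w.re| + 1) ×ℂ Icc (-(π / 2)) (π / 2))) :=
    ((isCompact_Icc.reProdIm isCompact_Icc).image continuous_addSinh).isClosed
  obtain ⟨z, hzK, rfl⟩ := closure_minimal (ball_inter_image_addSinh_strip_subset w) hK
    (isOpen_ball.inter_closure ⟨mem_ball_self one_pos, hcl⟩)
  rcases (abs_le.2 (mem_reProdIm.1 hzK).2).lt_or_eq with h | h
  · exact ⟨z, h, rfl⟩
  · exact absurd hw (addSinh_notMem_coshRegion h)

theorem image_addSinh_strip : addSinh '' strip = coshRegion := by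
  refine mapsTo_addSinh_strip.image_subset.antisymm <|
    isPreconnected_coshRegion.subset_of_closure_inter_subset (isOpenMap_addSinh _ isOpen_strip)
      ⟨0, ?_, 0, ?_, by simp [addSinh]⟩ closure_image_addSinh_strip_inter_subset
  · simpa [coshRegion] using (by positivity : 0 < π / 2 + 1)
  · simpa [strip] using pi_div_two_pos

/-- `F(z) = z + sinh z` is a conformal diffeomorphism from the strip
`S = {|Im z| < π/2}` onto `Ω = {|Im w| < π/2 + cosh (Re w)}`: it is injective
on `S`, maps `S` onto `Ω`, is holomorphic, and its derivative `1 + cosh z`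
does not vanish on `S`. -/
theorem conformal_diffeo_strip :
    let F : ℂ → ℂ := fun z => z + Complex.sinh z
    let S : Set ℂ := {z : ℂ | |z.im| < π / 2}
    let Ω : Set ℂ := {w : ℂ | |w.im| < π / 2 + Real.cosh w.re}
    Set.InjOn F S ∧
    F '' S = Ω ∧
    (∀ z : ℂ, HasDerivAt F (1 + Complex.cosh z) z) ∧
    (∀ z ∈ S, 1 + Complex.cosh z ≠ 0) :=
  ⟨injOn_addSinh_strip, image_addSinh_strip, hasDerivAt_addSinh,
    fun _ hz h => (re_one_add_cosh_pos hz).ne' (by rw [h, zero_re])⟩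
end

section
/- For all z, z′ ∈ ℂ, the real inner product of z − z′ with F(z) − F(z′) satisfies ⟨z − z′, F(z) − F(z′)⟩ = |z − z′|² · (1 + ∫₀¹ Re cosh(t·z + (1−t)·z′) dt), where ⟨w₁, w₂⟩ := Re(conj(w₁)·w₂). -/
/-! Since `F' = 1 + cosh`, the fundamental theorem of calculus along the segment `[z', z]` gives
`F z - F z' = (z - z') (1 + ∫₀¹ cosh (t z + (1 - t) z') dt)`; multiplying by `conj (z - z')`
turns the prefactor into `|z - z'|²`, and taking real parts commutes with the integral. -/

theorem sub_eq_mul_integral_segment {𝕜 E : Type*} [RCLike 𝕜] [NormedAddCommGroup E]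
    [NormedSpace 𝕜 E] [NormedSpace ℝ E] [IsScalarTower ℝ 𝕜 E] [CompleteSpace E]
    {f f' : 𝕜 → E} (hf : ∀ w, HasDerivAt f (f' w) w) (hf' : Continuous f') (z z' : 𝕜) :
    f z - f z' = (z - z') • ∫ t in (0:ℝ)..1, f' (t * z + (1 - t) * z') := by
  have hsegment : ∀ t : ℝ, z' + t • (z - z') = t * z + (1 - t) * z' := fun t => by
    rw [RCLike.real_smul_eq_coe_mul]; ring
  have hcont : ContinuousOn (fun t : ℝ => f' (z' + t • (z - z'))) (Set.Icc 0 1) := by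
    fun_prop
  have hftc := intervalIntegral.integral_unitInterval_deriv_eq_sub hcont fun t _ => hf _
  simp only [hsegment, add_sub_cancel] at hftc
  exact hftc.symm

theorem re_conj_mul_mul_self (w c : ℂ) : ((starRingEnd ℂ) w * (w * c)).re = ‖w‖ ^ 2 * c.re := by
  rw [← mul_assoc, Complex.conj_mul', ← Complex.ofReal_pow, Complex.re_ofReal_mul]

theorem re_intervalIntegral {f : ℝ → ℂ} {a b : ℝ}
    (hf : IntervalIntegrable f MeasureTheory.volume a b) :
    (∫ t in a..b, f t).re = ∫ t in a..b, (f t).re :=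
  (Complex.reCLM.intervalIntegral_comp_comm hf).symm

/-- For `F(z) = z + sinh z` and the real inner product
`⟨w₁, w₂⟩ = Re (conj w₁ * w₂)` on `ℂ ≅ ℝ²`, we have
`⟨z - z', F z - F z'⟩ = |z - z'|² (1 + ∫₀¹ Re cosh (t z + (1-t) z') dt)`. -/
theorem inner_sub_F_sub (z z' : ℂ) :
    let F : ℂ → ℂ := fun w => w + Complex.sinh w
    ((starRingEnd ℂ) (z - z') * (F z - F z')).re =
      ‖z - z'‖ ^ 2 *
        (1 + ∫ t in (0:ℝ)..1, (Complex.cosh (t * z + (1 - t) * z')).re) := by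
  intro F
  have hF : F z - F z' =
      (z - z') * (1 + ∫ t in (0:ℝ)..1, Complex.cosh (t * z + (1 - t) * z')) := by
    have hsinh := sub_eq_mul_integral_segment Complex.hasDerivAt_sinh Complex.continuous_cosh z z'
    rw [RCLike.ofReal_eq_complex_ofReal, smul_eq_mul] at hsinh
    rw [mul_add, mul_one, ← hsinh]
    ring
  have hcosh : IntervalIntegrable (fun t : ℝ => Complex.cosh (t * z + (1 - t) * z'))
      MeasureTheory.volume 0 1 := by
    apply Continuous.intervalIntegrable; fun_prop
  rw [hF, re_conj_mul_mul_self, Complex.add_re, Complex.one_re, re_intervalIntegral hcosh]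
end

section
/- Let n ≥ 1 be an integer and α := exp(2πi/n). For every z ∈ ℂ with zⁿ ≠ 1, one has (1 + zⁿ)/(1 − zⁿ) = −(1/n) · Σ_{k=1}^{n} (z + α^k)/(z − α^k). -/
/-!
Since `Xⁿ - 1 = ∏ₖ (X - αᵏ)`, its logarithmic derivative gives
`∑ₖ 1/(z - αᵏ) = n zⁿ⁻¹/(zⁿ - 1)`; writing `(z + w)/(z - w) = 2z/(z - w) - 1` turns the sum
into `n (zⁿ + 1)/(zⁿ - 1)`.
-/

open Real Finset Polynomial

namespace IsPrimitiveRoot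

variable {K : Type*} [Field K] {ζ : K} {n : ℕ} {x : K}

theorem sum_one_div_sub_pow (hζ : IsPrimitiveRoot ζ n) (hx : x ^ n ≠ 1) :
    ∑ k ∈ Icc 1 n, 1 / (x - ζ ^ k) = n * x ^ (n - 1) / (x ^ n - 1) := by
  have h := (X_pow_sub_one_splits hζ).eval_derivative_div_eval_of_ne_zero (x := x)
    (by simpa [sub_eq_zero] using hx)
  rw [← nthRoots, hζ.nthRoots_eq hζ.pow_eq_one] at h
  rw [← Ico_add_one_right_eq_Icc, sum_Ico_eq_sum_range, add_tsub_cancel_right]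
  simpa [← pow_succ, add_comm, derivative_X_pow, Finset.sum, Multiset.map_map] using h.symm

theorem sub_pow_ne_zero (hζ : IsPrimitiveRoot ζ n) (hx : x ^ n ≠ 1) (k : ℕ) :
    x - ζ ^ k ≠ 0 := by
  rw [sub_ne_zero]
  rintro rfl
  exact hx (by rw [← pow_mul, mul_comm, pow_mul, hζ.pow_eq_one, one_pow])

theorem sum_add_div_sub_pow (hζ : IsPrimitiveRoot ζ n) (hx : x ^ n ≠ 1) :
    ∑ k ∈ Icc 1 n, (x + ζ ^ k) / (x - ζ ^ k) = n * (x ^ n + 1) / (x ^ n - 1) := by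
  have hn : n ≠ 0 := by rintro rfl; exact hx (pow_zero x)
  have hsplit : ∀ k ∈ Icc 1 n, (x + ζ ^ k) / (x - ζ ^ k) = 2 * x * (1 / (x - ζ ^ k)) - 1 := by
    intro k _
    have := hζ.sub_pow_ne_zero hx k
    field_simp
    ring
  have hxn : x ^ n - 1 ≠ 0 := sub_ne_zero.mpr hx
  rw [sum_congr rfl hsplit, sum_sub_distrib, ← mul_sum, hζ.sum_one_div_sub_pow hx, sum_const,
    Nat.card_Icc, add_tsub_cancel_right, nsmul_one]
  field_simp
  rw [← mul_pow_sub_one hn x]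
  ring

end IsPrimitiveRoot

theorem poisson_sum_formula_general (n : ℕ) (z : ℂ) (hz : z ^ n ≠ 1) :
    (1 + z ^ n) / (1 - z ^ n) =
      -(1 / (n : ℂ)) * ∑ k ∈ Finset.Icc 1 n,
        (z + Complex.exp (2 * π * Complex.I / n) ^ k) /
          (z - Complex.exp (2 * π * Complex.I / n) ^ k) := by
  have hn : n ≠ 0 := by rintro rfl; exact hz (pow_zero z)
  have hzn : z ^ n - 1 ≠ 0 := sub_ne_zero.mpr hz
  rw [(Complex.isPrimitiveRoot_exp n hn).sum_add_div_sub_pow hz]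
  field_simp
  ring

/-- For `n ≥ 1`, `α = exp (2πi/n)` and `zⁿ ≠ 1`,
`(1+zⁿ)/(1-zⁿ) = -(1/n) Σ_{k=1}^{n} (z + αᵏ)/(z - αᵏ)`. -/
theorem poisson_sum_formula (n : ℕ) (hn : 1 ≤ n) (z : ℂ) (hz : z ^ n ≠ 1) :
    (1 + z ^ n) / (1 - z ^ n) =
      -(1 / (n : ℂ)) * ∑ k ∈ Finset.Icc 1 n,
        (z + Complex.exp (2 * π * Complex.I / n) ^ k) /
          (z - Complex.exp (2 * π * Complex.I / n) ^ k) :=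
  poisson_sum_formula_general n z hz
end

section
/- Let H be a function holomorphic on an open set of ℂ containing the closed unit disk, and suppose |H(z)| = 1 for every z with |z| = 1. Then there exist m ∈ ℕ, points z₁, …, z_m in the open unit disk, and a constant C ∈ ℂ with |C| = 1 such that H(z) = C · Π_{k=1}^{m} (z − z_k)/(conj(z_k)·z − 1) for every z in the closed unit disk. -/
/-! Induct on the number of zeros of `H` in the closed disk, counted with multiplicity; it is
finite because `H` is analytic near the compact disk and not identically zero. These zeros lie in
the open disk, and if `H a = 0` then `H = H₁ * b_a` with `b_a z = (z - a) / (conj a * z - 1)` and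
`H₁ = dslope H a * (conj a * · - 1)` again holomorphic near the disk; as `|b_a| = 1` on the circle,
`H₁` is unimodular there, and it has one zero fewer. Once there are no zeros, the maximum principle
for `H` and `1 / H` gives `|H| = 1` on the whole disk, so `H` is constant. -/

open Metric Set Filter Topology Finset

namespace AnalyticOnNhd

variable {𝕜 E : Type*} [NontriviallyNormedField 𝕜] [NormedAddCommGroup E] [NormedSpace 𝕜 E]
  {f : 𝕜 → E} {K : Set 𝕜} {x : 𝕜}

theorem finite_inter_preimage_zero (hf : AnalyticOnNhd 𝕜 f K) (hK : IsCompact K)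
    (hKc : IsConnected K) (hx : x ∈ K) (hfx : f x ≠ 0) : (K ∩ f ⁻¹' {0}).Finite := by
  simpa [sdiff_compl] using
    hK.finite_sdiff_of_mem_codiscreteWithin (hf.preimage_zero_mem_codiscreteWithin hfx hx hKc)

theorem sum_analyticOrderAt_ne_top (hf : AnalyticOnNhd 𝕜 f K) (hK : IsPreconnected K)
    (hx : x ∈ K) (hfx : f x ≠ 0) {S : Finset 𝕜} (hSK : ∀ z ∈ S, z ∈ K) :
    ∑ z ∈ S, analyticOrderAt f z ≠ ⊤ := by
  have hxtop : analyticOrderAt f x ≠ ⊤ := by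
    rw [(hf x hx).analyticOrderAt_eq_zero.2 hfx]
    exact ENat.zero_ne_top
  exact ENat.sum_ne_top.2 fun z hz ↦
    hf.analyticOrderAt_ne_top_of_isPreconnected hK hx (hSK z hz) hxtop

end AnalyticOnNhd

theorem norm_eq_one_of_diffContOnCl_of_ne_zero {E : Type*} [NormedAddCommGroup E]
    [NormedSpace ℂ E] [Nontrivial E] {f : E → ℂ} {U : Set E} (hU : Bornology.IsBounded U)
    (hf : DiffContOnCl ℂ f U) (hf₀ : ∀ z ∈ closure U, f z ≠ 0)
    (hf₁ : ∀ z ∈ frontier U, ‖f z‖ = 1) {z : E} (hz : z ∈ closure U) : ‖f z‖ = 1 := by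
  refine le_antisymm (Complex.norm_le_of_forall_mem_frontier_norm_le hU hf (hf₁ · · |>.le) hz) ?_
  have := Complex.norm_le_of_forall_mem_frontier_norm_le hU (hf.inv hf₀)
    (fun w hw ↦ by rw [Pi.inv_apply, norm_inv, hf₁ w hw, inv_one]) hz
  rwa [Pi.inv_apply, norm_inv, inv_le_one₀ (norm_pos_iff.2 (hf₀ z hz))] at this

noncomputable def blaschkeFactor (a z : ℂ) : ℂ :=
  (z - a) / ((starRingEnd ℂ) a * z - 1)

def IsFiniteBlaschkeProductOnClosedDisk (H : ℂ → ℂ) : Prop :=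
  ∃ (m : ℕ) (zk : Fin m → ℂ) (C : ℂ),
    (∀ k, ‖zk k‖ < 1) ∧ ‖C‖ = 1 ∧
    ∀ z ∈ closedBall (0 : ℂ) 1, H z = C * ∏ k, blaschkeFactor (zk k) z

section BlaschkeFactor

variable {a z : ℂ}

theorem conj_mul_sub_one_ne_zero (ha : ‖a‖ < 1) (hz : ‖z‖ ≤ 1) :
    (starRingEnd ℂ) a * z - 1 ≠ 0 := by
  intro h
  have : ‖(starRingEnd ℂ) a * z‖ = 1 := by rw [sub_eq_zero.1 h, norm_one]
  rw [norm_mul, Complex.norm_conj] at this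
  nlinarith [norm_nonneg z, norm_nonneg a]

theorem norm_blaschkeFactor_eq_one (hz : ‖z‖ = 1) (hza : z ≠ a) : ‖blaschkeFactor a z‖ = 1 := by
  have hzz : z * (starRingEnd ℂ) z = 1 := by
    rw [Complex.mul_conj, Complex.normSq_eq_norm_sq, hz]; norm_num
  have hden : ‖(starRingEnd ℂ) a * z - 1‖ = ‖z - a‖ := by
    rw [show (starRingEnd ℂ) a * z - 1 = z * (starRingEnd ℂ) (a - z) by
      rw [map_sub]; linear_combination hzz]
    rw [norm_mul, hz, one_mul, Complex.norm_conj, norm_sub_rev]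
  rw [blaschkeFactor, norm_div, hden, div_self (norm_ne_zero_iff.2 (sub_ne_zero.2 hza))]

theorem analyticAt_blaschkeFactor (h : (starRingEnd ℂ) a * z - 1 ≠ 0) :
    AnalyticAt ℂ (blaschkeFactor a) z :=
  (analyticAt_id.sub analyticAt_const).div
    ((analyticAt_const.mul analyticAt_id).sub analyticAt_const) h

theorem analyticOrderAt_blaschkeFactor (h : (starRingEnd ℂ) a * z - 1 ≠ 0) :
    analyticOrderAt (blaschkeFactor a) z = if z = a then 1 else 0 := by
  split_ifs with hza
  · subst hza
    rw [← Nat.cast_one, (analyticAt_blaschkeFactor h).analyticOrderAt_eq_natCast]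
    refine ⟨fun w ↦ ((starRingEnd ℂ) z * w - 1)⁻¹,
      ((analyticAt_const.mul analyticAt_id).sub analyticAt_const).inv h, inv_ne_zero h, ?_⟩
    filter_upwards with w
    simp only [blaschkeFactor, pow_one, smul_eq_mul, div_eq_mul_inv]
  · rw [(analyticAt_blaschkeFactor h).analyticOrderAt_eq_zero]
    exact div_ne_zero (sub_ne_zero.2 hza) h

end BlaschkeFactor

theorem IsFiniteBlaschkeProductOnClosedDisk.of_eq_mul_blaschkeFactor {H H₁ : ℂ → ℂ} {a : ℂ}
    (h₁ : IsFiniteBlaschkeProductOnClosedDisk H₁) (ha : ‖a‖ < 1)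
    (h : ∀ z ∈ closedBall (0 : ℂ) 1, H z = H₁ z * blaschkeFactor a z) :
    IsFiniteBlaschkeProductOnClosedDisk H := by
  obtain ⟨m, zk, C, hzk, hC, hH₁⟩ := h₁
  refine ⟨m + 1, Fin.cons a zk, C, Fin.cases ha hzk, hC, fun z hz ↦ ?_⟩
  rw [h z hz, hH₁ z hz, Fin.prod_univ_succ, Fin.cons_zero]
  simp only [Fin.cons_succ]
  ring

theorem isFiniteBlaschkeProductOnClosedDisk_of_forall_ne_zero {H : ℂ → ℂ}
    (hH : DifferentiableOn ℂ H (closedBall 0 1)) (hmod : ∀ z : ℂ, ‖z‖ = 1 → ‖H z‖ = 1)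
    (hH₀ : ∀ z ∈ closedBall (0 : ℂ) 1, H z ≠ 0) :
    IsFiniteBlaschkeProductOnClosedDisk H := by
  have hcl : closure (ball (0 : ℂ) 1) = closedBall 0 1 := closure_ball 0 one_ne_zero
  have h0 : (0 : ℂ) ∈ closedBall 0 1 := mem_closedBall_self zero_le_one
  have hd : DiffContOnCl ℂ H (ball 0 1) := (hcl ▸ hH).diffContOnCl
  have hnorm : ∀ z ∈ closedBall (0 : ℂ) 1, ‖H z‖ = 1 := by
    refine fun z hz ↦ norm_eq_one_of_diffContOnCl_of_ne_zero isBounded_ball hd (hcl ▸ hH₀)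
      (fun w hw ↦ hmod w ?_) (hcl ▸ hz)
    rwa [frontier_ball 0 one_ne_zero, mem_sphere_zero_iff_norm] at hw
  have hconst := Complex.eqOn_closure_of_isPreconnected_of_isMaxOn_norm
    (convex_ball (0 : ℂ) 1).isPreconnected isOpen_ball hd (mem_ball_self one_pos)
    (fun w hw ↦ by simp [hnorm w (ball_subset_closedBall hw), hnorm 0 h0])
  refine ⟨0, Fin.elim0, H 0, fun k ↦ k.elim0, hnorm 0 h0, fun z hz ↦ ?_⟩
  simpa using hconst (hcl ▸ hz)

theorem exists_eq_mul_blaschkeFactor {H : ℂ → ℂ} {V : Set ℂ} {a : ℂ} (hV : IsOpen V)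
    (hH : DifferentiableOn ℂ H V) (haV : a ∈ V) (hHa : H a = 0) :
    ∃ H₁ : ℂ → ℂ, DifferentiableOn ℂ H₁ V ∧
      ∀ z, (starRingEnd ℂ) a * z - 1 ≠ 0 → H z = H₁ z * blaschkeFactor a z := by
  refine ⟨fun z ↦ dslope H a z * ((starRingEnd ℂ) a * z - 1),
    ((Complex.differentiableOn_dslope (hV.mem_nhds haV)).2 hH).mul (by fun_prop), fun z hz ↦ ?_⟩
  have := sub_smul_dslope H a z
  rw [hHa, sub_zero, smul_eq_mul] at this
  rw [blaschkeFactor, ← this, mul_assoc, mul_div_cancel₀ _ hz, mul_comm]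

theorem sum_analyticOrderAt_eq_add_one {H H₁ : ℂ → ℂ} {S : Finset ℂ} {a : ℂ}
    (hS : ∀ z ∈ S, ‖z‖ < 1) (haS : a ∈ S) (hH₁ : ∀ z ∈ S, AnalyticAt ℂ H₁ z)
    (h : ∀ z ∈ closedBall (0 : ℂ) 1, H z = H₁ z * blaschkeFactor a z) :
    ∑ z ∈ S, analyticOrderAt H z = ∑ z ∈ S, analyticOrderAt H₁ z + 1 := by
  have hord : ∀ z ∈ S, analyticOrderAt H z =
      analyticOrderAt H₁ z + if z = a then 1 else 0 := by
    intro z hz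
    have hden := conj_mul_sub_one_ne_zero (hS a haS) (hS z hz).le
    have hH : H =ᶠ[𝓝 z] H₁ * blaschkeFactor a :=
      eventually_of_mem (closedBall_mem_nhds_of_mem (mem_ball_zero_iff.2 (hS z hz))) h
    rw [← analyticOrderAt_blaschkeFactor hden, analyticOrderAt_congr hH,
      analyticOrderAt_mul (hH₁ z hz) (analyticAt_blaschkeFactor hden)]
  rw [sum_congr rfl hord, sum_add_distrib, sum_ite_eq' S a, if_pos haS]

theorem isFiniteBlaschkeProductOnClosedDisk_of_sum_analyticOrderAt_lt {V : Set ℂ}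
    (hV : IsOpen V) (hDV : closedBall (0 : ℂ) 1 ⊆ V) {S : Finset ℂ} (hS : ∀ z ∈ S, ‖z‖ < 1)
    (n : ℕ) {H : ℂ → ℂ} (hH : DifferentiableOn ℂ H V) (hmod : ∀ z : ℂ, ‖z‖ = 1 → ‖H z‖ = 1)
    (hzeros : ∀ z ∈ closedBall (0 : ℂ) 1, H z = 0 → z ∈ S)
    (hn : ∑ z ∈ S, analyticOrderAt H z < n) :
    IsFiniteBlaschkeProductOnClosedDisk H := by
  induction n generalizing H with
  | zero => exact absurd hn (by simp)
  | succ n ih =>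
    by_cases hzero : ∃ a ∈ closedBall (0 : ℂ) 1, H a = 0
    · obtain ⟨a, haD, hHa⟩ := hzero
      have haS := hzeros a haD hHa
      have ha := hS a haS
      obtain ⟨H₁, hH₁, hfac⟩ := exists_eq_mul_blaschkeFactor hV hH (hDV haD) hHa
      replace hfac : ∀ z ∈ closedBall (0 : ℂ) 1, H z = H₁ z * blaschkeFactor a z :=
        fun z hz ↦ hfac z (conj_mul_sub_one_ne_zero ha (mem_closedBall_zero_iff.1 hz))
      refine (ih hH₁ (fun z hz ↦ ?_) (fun z hz hz₀ ↦ hzeros z hz ?_) ?_).of_eq_mul_blaschkeFactor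
        ha hfac
      · have hza : z ≠ a := by rintro rfl; exact ha.ne hz
        rw [← hmod z hz, hfac z (mem_closedBall_zero_iff.2 hz.le), norm_mul,
          norm_blaschkeFactor_eq_one hz hza, mul_one]
      · rw [hfac z hz, hz₀, zero_mul]
      · rw [sum_analyticOrderAt_eq_add_one hS haS
          (fun z hz ↦ hH₁.analyticOnNhd hV z (hDV (mem_closedBall_zero_iff.2 (hS z hz).le))) hfac,
          Nat.cast_succ] at hn
        exact (ENat.add_lt_add_iff_right ENat.one_ne_top).1 hn
    · push Not at hzero
      exact isFiniteBlaschkeProductOnClosedDisk_of_forall_ne_zero (hH.mono hDV) hmod hzero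

/-- A function holomorphic on a neighborhood of the closed unit disk with
unimodular boundary values is a finite Blaschke product (up to a unimodular
constant). -/
theorem blaschke_product_representation
    (H : ℂ → ℂ) (V : Set ℂ) (hV : IsOpen V)
    (hDV : Metric.closedBall (0 : ℂ) 1 ⊆ V)
    (hH : DifferentiableOn ℂ H V)
    (hmod : ∀ z : ℂ, ‖z‖ = 1 → ‖H z‖ = 1) :
    ∃ (m : ℕ) (zk : Fin m → ℂ) (C : ℂ),
      (∀ k, ‖zk k‖ < 1) ∧ ‖C‖ = 1 ∧
      ∀ z ∈ Metric.closedBall (0 : ℂ) 1,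
        H z = C * ∏ k, (z - zk k) / ((starRingEnd ℂ) (zk k) * z - 1) := by
  have hA : AnalyticOnNhd ℂ H (closedBall 0 1) := (hH.analyticOnNhd hV).mono hDV
  have h1 : (1 : ℂ) ∈ closedBall 0 1 := by simp
  have hH1 : H 1 ≠ 0 := norm_ne_zero_iff.1 (by simp [hmod 1 (by simp)])
  have hconn : IsConnected (closedBall (0 : ℂ) 1) := isConnected_closedBall zero_le_one
  set S := (hA.finite_inter_preimage_zero (isCompact_closedBall 0 1) hconn h1 hH1).toFinset
  have hmemS : ∀ z, z ∈ S ↔ ‖z‖ ≤ 1 ∧ H z = 0 := by simp [S]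
  have hS : ∀ z ∈ S, ‖z‖ < 1 := fun z hz ↦
    ((hmemS z).1 hz).1.lt_of_ne fun h ↦ by simpa [((hmemS z).1 hz).2] using hmod z h
  have hsum : ∑ z ∈ S, analyticOrderAt H z ≠ ⊤ := hA.sum_analyticOrderAt_ne_top
    hconn.isPreconnected h1 hH1 fun z hz ↦ mem_closedBall_zero_iff.2 ((hmemS z).1 hz).1
  exact isFiniteBlaschkeProductOnClosedDisk_of_sum_analyticOrderAt_lt hV hDV hS
    ((∑ z ∈ S, analyticOrderAt H z).toNat + 1) hH hmod
    (fun z hz hz₀ ↦ (hmemS z).2 ⟨mem_closedBall_zero_iff.1 hz, hz₀⟩)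
    (by rw [Nat.cast_succ, ENat.natCast_toNat hsum]; exact (ENat.lt_add_one_iff hsum).2 le_rfl)
end

section
/- Let α₁, …, αₙ be finitely many points of the unit circle and let U : ℂ → ℂ be holomorphic on the open unit disk D, continuous on (closure of D) \ {α₁, …, αₙ}, with Re U(z) = 0 for every z on the unit circle with z ∉ {α₁, …, αₙ}. Define V(z) := U(z) for |z| ≤ 1 and V(z) := −conj(U(1/conj(z))) for |z| > 1. Then V is complex differentiable (holomorphic) at every point of ℂ \ {α₁, …, αₙ}. -/
/-!
`V` is holomorphic off the unit circle, where it is `U` or its reflection, and it is continuous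
at the points of the circle outside `{α₁, …, αₙ}` because `Re U = 0` forces `U = -conj U` there.
A function that is continuous on an open set and holomorphic off a circle is holomorphic: the
map `w ↦ c + (z₀ - c) e^{iw}` reduces this to the real line, and there the integral of the
function around any rectangle vanishes (cut the rectangle along the real axis and apply
Cauchy–Goursat to each half), so Morera's theorem applies.
-/

open Complex ComplexConjugate Set Metric Filter Topology intervalIntegral
open scoped Interval

namespace Complex

variable {E : Type*} [NormedAddCommGroup E] [NormedSpace ℂ E] {f : ℂ → E}

/- `wedgeIntegral z w f + wedgeIntegral w z f` is the integral of `f` around the boundary of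
`Rectangle z w`. -/

lemma wedgeIntegral_add_wedgeIntegral_split_horizontal {z w : ℂ} {t : ℝ}
    (hc : ContinuousOn f (Rectangle z w)) (ht : t ∈ [[z.im, w.im]]) :
    wedgeIntegral z w f + wedgeIntegral w z f =
      (wedgeIntegral z ⟨w.re, t⟩ f + wedgeIntegral ⟨w.re, t⟩ z f) +
        (wedgeIntegral ⟨z.re, t⟩ w f + wedgeIntegral w ⟨z.re, t⟩ f) := by
  have vertical {x : ℝ} (hx : x ∈ [[z.re, w.re]]) {a b : ℝ} (hab : [[a, b]] ⊆ [[z.im, w.im]]) :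
      IntervalIntegrable (fun y : ℝ ↦ f (x + y * I)) MeasureTheory.volume a b :=
    (hc.comp (by fun_prop) fun y hy ↦ ⟨by simpa using hx, by simpa using hab hy⟩).intervalIntegrable
  simp only [wedgeIntegral_add_wedgeIntegral_eq]
  have below : [[z.im, t]] ⊆ [[z.im, w.im]] := uIcc_subset_uIcc left_mem_uIcc ht
  have above : [[t, w.im]] ⊆ [[z.im, w.im]] := uIcc_subset_uIcc ht right_mem_uIcc
  rw [← integral_add_adjacent_intervals (vertical right_mem_uIcc below)
      (vertical right_mem_uIcc above),
    ← integral_add_adjacent_intervals (vertical left_mem_uIcc below)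
      (vertical left_mem_uIcc above)]
  simp only [smul_add]
  abel

lemma wedgeIntegral_add_wedgeIntegral_eq_zero_of_zero_notMem_Ioo {z w : ℂ}
    (hc : ContinuousOn f (Rectangle z w))
    (hd : DifferentiableOn ℂ f (Rectangle z w \ {p | p.im = 0}))
    (h0 : (0 : ℝ) ∉ Ioo (min z.im w.im) (max z.im w.im)) :
    wedgeIntegral z w f + wedgeIntegral w z f = 0 := by
  rw [wedgeIntegral_add_wedgeIntegral_eq]
  refine integral_boundary_rect_eq_zero_of_continuousOn_of_differentiableOn f z w hc
    (hd.mono fun p hp ↦ ⟨?_, fun him ↦ h0 (him ▸ hp.2)⟩)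
  exact ⟨Ioo_subset_Icc_self hp.1, Ioo_subset_Icc_self hp.2⟩

lemma wedgeIntegral_add_wedgeIntegral_eq_zero_of_differentiableOn_diff_real {z w : ℂ}
    (hc : ContinuousOn f (Rectangle z w))
    (hd : DifferentiableOn ℂ f (Rectangle z w \ {p | p.im = 0})) :
    wedgeIntegral z w f + wedgeIntegral w z f = 0 := by
  by_cases h0 : (0 : ℝ) ∈ [[z.im, w.im]]
  · have lower : Rectangle z ⟨w.re, 0⟩ ⊆ Rectangle z w :=
      reProdIm_subset_iff'.2 (Or.inl ⟨subset_rfl, uIcc_subset_uIcc left_mem_uIcc h0⟩)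
    have upper : Rectangle ⟨z.re, 0⟩ w ⊆ Rectangle z w :=
      reProdIm_subset_iff'.2 (Or.inl ⟨subset_rfl, uIcc_subset_uIcc h0 right_mem_uIcc⟩)
    have notMem {a b : ℝ} (h : a = 0 ∨ b = 0) : (0 : ℝ) ∉ Ioo (min a b) (max a b) := by
      rcases h with rfl | rfl <;> simp +contextual [le_of_lt]
    rw [wedgeIntegral_add_wedgeIntegral_split_horizontal hc h0,
      wedgeIntegral_add_wedgeIntegral_eq_zero_of_zero_notMem_Ioo (hc.mono lower)
        (hd.mono (sdiff_subset_sdiff_left lower)) (notMem (Or.inr rfl)),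
      wedgeIntegral_add_wedgeIntegral_eq_zero_of_zero_notMem_Ioo (hc.mono upper)
        (hd.mono (sdiff_subset_sdiff_left upper)) (notMem (Or.inl rfl)), add_zero]
  · exact wedgeIntegral_add_wedgeIntegral_eq_zero_of_zero_notMem_Ioo hc hd
      fun h ↦ h0 (Ioo_subset_Icc_self h)

variable [CompleteSpace E]

theorem differentiableOn_of_continuousOn_of_differentiableOn_diff_real {U : Set ℂ}
    (hU : IsOpen U) (hc : ContinuousOn f U) (hd : DifferentiableOn ℂ f (U \ {p | p.im = 0})) :
    DifferentiableOn ℂ f U :=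
  (isConservativeOn_and_continuousOn_iff_isDifferentiableOn hU).1
    ⟨fun _ _ hzw ↦ eq_neg_of_add_eq_zero_left <|
      wedgeIntegral_add_wedgeIntegral_eq_zero_of_differentiableOn_diff_real (hc.mono hzw)
        (hd.mono (sdiff_subset_sdiff_left hzw)), hc⟩

theorem differentiableOn_of_continuousOn_of_differentiableOn_diff_sphere {U : Set ℂ} {c : ℂ}
    {r : ℝ} (hr : r ≠ 0) (hU : IsOpen U) (hc : ContinuousOn f U)
    (hd : DifferentiableOn ℂ f (U \ sphere c r)) :
    DifferentiableOn ℂ f U := by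
  intro z₀ hz₀
  by_cases hs : z₀ ∉ sphere c r
  · exact (hd.differentiableAt ((hU.sdiff isClosed_sphere).mem_nhds ⟨hz₀, hs⟩)
      ).differentiableWithinAt
  rw [not_not, mem_sphere, dist_eq_norm] at hs
  have hz₀c : z₀ - c ≠ 0 := norm_ne_zero_iff.1 (hs ▸ hr)
  -- `φ` wraps the real line around the circle, with local inverse `ψ` near `z₀ = φ 0`
  set φ : ℂ → ℂ := fun w ↦ c + (z₀ - c) * exp (I * w) with hφ
  set ψ : ℂ → ℂ := fun z ↦ -I * log ((z - c) / (z₀ - c)) with hψ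
  have im_eq_zero_of_φ_mem_sphere {w : ℂ} (hw : φ w ∈ sphere c r) : w.im = 0 := by
    rw [mem_sphere, dist_eq_norm, hφ, add_sub_cancel_left, norm_mul, hs, norm_exp] at hw
    simpa [mul_re, hr] using hw
  have φ_ψ {z : ℂ} (hz : z ≠ c) : φ (ψ z) = z := by
    simp only [hφ, hψ, ← mul_assoc, mul_neg, I_mul_I, neg_neg, one_mul]
    rw [exp_log (div_ne_zero (sub_ne_zero.2 hz) hz₀c), mul_div_cancel₀ _ hz₀c, add_sub_cancel]
  have hφc : Continuous φ := by fun_prop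
  have hfφ : DifferentiableOn ℂ (f ∘ φ) (φ ⁻¹' U) := by
    refine differentiableOn_of_continuousOn_of_differentiableOn_diff_real (hU.preimage hφc)
      (hc.comp hφc.continuousOn (mapsTo_preimage _ _)) fun w hw ↦ ?_
    have hφw : φ w ∈ U \ sphere c r := ⟨hw.1, fun h ↦ hw.2 (im_eq_zero_of_φ_mem_sphere h)⟩
    exact ((hd.differentiableAt ((hU.sdiff isClosed_sphere).mem_nhds hφw)).comp w
      (by fun_prop)).differentiableWithinAt
  have hψd : DifferentiableAt ℂ ψ z₀ :=
    (differentiableAt_const _).mul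
      (((differentiableAt_id.sub_const c).div_const _).clog (by simp [div_self hz₀c]))
  have hψ₀ : ψ z₀ = 0 := by simp [hψ, div_self hz₀c]
  have hfφψ : DifferentiableAt ℂ (f ∘ φ ∘ ψ) z₀ :=
    (hfφ.differentiableAt ((hU.preimage hφc).mem_nhds (by simpa [hψ₀, hφ] using hz₀))).comp z₀ hψd
  refine (hfφψ.congr_of_eventuallyEq ?_).differentiableWithinAt
  filter_upwards [isOpen_ne.mem_nhds (sub_ne_zero.1 hz₀c)] with z hz
  simp [φ_ψ hz]

end Complex

lemma continuousAt_of_continuousWithinAt_closedBall_of_continuousWithinAt_compl_ball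
    {X Y : Type*} [PseudoMetricSpace X] [TopologicalSpace Y] {f : X → Y} {c x : X} {r : ℝ}
    (hin : ContinuousWithinAt f (closedBall c r) x) (hout : ContinuousWithinAt f (ball c r)ᶜ x) :
    ContinuousAt f x :=
  (continuousWithinAt_univ f x).1 <| (hin.union hout).mono fun y _ ↦
    (em (y ∈ ball c r)).imp (ball_subset_closedBall ·) id

lemma one_div_conj_of_norm_eq_one {z : ℂ} (hz : ‖z‖ = 1) : 1 / conj z = z := by
  rw [one_div, ← inv_eq_conj hz, inv_inv]

lemma DifferentiableOn.neg_conj_comp_one_div_conj {U : ℂ → ℂ}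
    (hU : DifferentiableOn ℂ U (ball 0 1)) :
    DifferentiableOn ℂ (fun w ↦ -conj (U (1 / conj w))) (closedBall 0 1)ᶜ := by
  intro z hz
  replace hz : 1 < ‖z‖ := by simpa using hz
  have hz₀ : z ≠ 0 := by rintro rfl; simp at hz; linarith
  have hUz : DifferentiableAt ℂ (conj ∘ U ∘ conj) z⁻¹ :=
    differentiableAt_conj_conj_iff.2 <| hU.differentiableAt <| isOpen_ball.mem_nhds <| by
      simpa using inv_lt_one_of_one_lt₀ hz
  simpa [Function.comp_def] using
    ((hUz.comp z (differentiableAt_inv hz₀)).neg).differentiableWithinAt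

lemma continuousWithinAt_neg_conj_comp_one_div_conj {U : ℂ → ℂ} {z : ℂ} (hz : ‖z‖ = 1)
    (hU : ContinuousWithinAt U (closedBall 0 1) z) :
    ContinuousWithinAt (fun w ↦ -conj (U (1 / conj w))) (ball 0 1)ᶜ z := by
  have hσ : ContinuousAt (fun w : ℂ ↦ 1 / conj w) z :=
    continuousAt_const.div continuous_conj.continuousAt
      (by simpa using norm_ne_zero_iff.1 (hz ▸ one_ne_zero))
  have hmaps : MapsTo (fun w : ℂ ↦ 1 / conj w) (ball 0 1)ᶜ (closedBall 0 1) := fun w hw ↦ by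
    simpa using inv_le_one_of_one_le₀ (by simpa using hw)
  rw [← one_div_conj_of_norm_eq_one hz] at hU
  exact (continuous_conj.continuousAt.comp_continuousWithinAt
    (hU.comp (f := fun w ↦ 1 / conj w) hσ.continuousWithinAt hmaps)).neg

theorem schwarz_reflection_extension_general
    (n : ℕ) (α : Fin n → ℂ)
    (U : ℂ → ℂ)
    (hholo : DifferentiableOn ℂ U (Metric.ball (0 : ℂ) 1))
    (hcont : ContinuousOn U (Metric.closedBall (0 : ℂ) 1 \ Set.range α))
    (hre : ∀ z : ℂ, ‖z‖ = 1 → z ∉ Set.range α → (U z).re = 0)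
    (V : ℂ → ℂ)
    (hV : ∀ z : ℂ, V z = if ‖z‖ ≤ 1 then U z
      else -(starRingEnd ℂ) (U (1 / (starRingEnd ℂ) z))) :
    ∀ z : ℂ, z ∉ Set.range α → DifferentiableAt ℂ V z := by
  set R : ℂ → ℂ := fun w ↦ -conj (U (1 / conj w))
  have hS : IsOpen (range α)ᶜ := (finite_range α).isClosed.isOpen_compl
  have hVU : EqOn V U (closedBall 0 1) := fun w hw ↦ by rw [hV, if_pos (by simpa using hw)]
  have hVR : EqOn V R (closedBall 0 1)ᶜ := fun w hw ↦ by rw [hV, if_neg (by simpa using hw)]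
  have hVR_of_notMem : EqOn V R ((ball 0 1)ᶜ ∩ (range α)ᶜ) := by
    rintro w ⟨hw, hwS⟩
    by_cases hw₁ : ‖w‖ = 1
    · simp only [R, hVU (by simp [hw₁] : w ∈ closedBall 0 1), one_div_conj_of_norm_eq_one hw₁]
      exact Complex.ext (by simp [hre w hw₁ hwS]) (by simp)
    · exact hVR (by simp_all [le_antisymm_iff])
  have hd : DifferentiableOn ℂ V (sphere 0 1)ᶜ :=
    ((hholo.congr fun w hw ↦ hVU (ball_subset_closedBall hw)).union_of_isOpen
      (hholo.neg_conj_comp_one_div_conj.congr hVR) isOpen_ball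
      isClosed_closedBall.isOpen_compl).mono fun w hw ↦ by simp_all [lt_or_lt_iff_ne]
  have hc : ContinuousOn V (range α)ᶜ := by
    intro z hz
    by_cases hz₁ : ‖z‖ = 1
    · have hU : ContinuousWithinAt U (closedBall 0 1) z :=
        (continuousWithinAt_inter (hS.mem_nhds hz)).1 (hcont z ⟨by simp [hz₁], hz⟩)
      refine (continuousAt_of_continuousWithinAt_closedBall_of_continuousWithinAt_compl_ball
        (hU.congr hVU (hVU (by simp [hz₁]))) ?_).continuousWithinAt
      exact (continuousWithinAt_inter (hS.mem_nhds hz)).1 <|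
        ((continuousWithinAt_neg_conj_comp_one_div_conj hz₁ hU).mono inter_subset_left).congr
          hVR_of_notMem (hVR_of_notMem ⟨by simp [hz₁], hz⟩)
    · exact (hd.differentiableAt (isClosed_sphere.isOpen_compl.mem_nhds (by simpa using hz₁))
        ).continuousAt.continuousWithinAt
  intro z hz
  exact (differentiableOn_of_continuousOn_of_differentiableOn_diff_sphere one_ne_zero hS hc
    (hd.mono (sdiff_subset_compl _ _))).differentiableAt (hS.mem_nhds hz)

/-- Schwarz reflection: if `U` is holomorphic on the unit disk, continuous up
to the boundary away from finitely many points `α₁, …, αₙ` of the unit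
circle, with `Re U = 0` on the circle away from these points, then the
extension `V` of `U` by `V(z) = -conj (U (1/conj z))` outside the closed disk
is holomorphic on `ℂ \ {α₁, …, αₙ}`. -/
theorem schwarz_reflection_extension
    (n : ℕ) (α : Fin n → ℂ) (hα : ∀ k, ‖α k‖ = 1)
    (U : ℂ → ℂ)
    (hholo : DifferentiableOn ℂ U (Metric.ball (0 : ℂ) 1))
    (hcont : ContinuousOn U (Metric.closedBall (0 : ℂ) 1 \ Set.range α))
    (hre : ∀ z : ℂ, ‖z‖ = 1 → z ∉ Set.range α → (U z).re = 0)
    (V : ℂ → ℂ)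
    (hV : ∀ z : ℂ, V z = if ‖z‖ ≤ 1 then U z
      else -(starRingEnd ℂ) (U (1 / (starRingEnd ℂ) z))) :
    ∀ z : ℂ, z ∉ Set.range α → DifferentiableAt ℂ V z :=
  schwarz_reflection_extension_general n α U hholo hcont hre V hV
end

section
/- Let ℓ ∈ (0, π/2), let E := {e^{is} : s ∈ [−ℓ/2, ℓ/2]} and −E := {−e^{is} : s ∈ [−ℓ/2, ℓ/2]} be opposite arcs of the unit circle, and let f : ℝ² → ℝ be continuously differentiable with f = 1 at every point of E and f = 0 at every point of −E. Then the Dirichlet energy of f over the open unit disk satisfies ∫_{D} ‖∇f‖² ≥ sin(ℓ/2). -/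
open Real MeasureTheory Complex

/-!
Slice the disk by the horizontal chords at heights `|y| ≤ sin (ℓ/2)`: the chord at height `y`
runs from `-√(1 - y²) + y i ∈ -E` to `√(1 - y²) + y i ∈ E`, so `f` rises by `1` along it, and by
Cauchy–Schwarz the energy of `∂ₓf` on a chord of length `2√(1 - y²) ≤ 2` is at least `1/2`.
Integrating over the `2 sin (ℓ/2)` worth of such heights (Fubini) gives the bound.
-/

theorem sq_sub_le_mul_integral_sq_deriv {g g' : ℝ → ℝ} {a b : ℝ} (hab : a ≤ b)
    (hg : ∀ x ∈ Set.uIcc a b, HasDerivAt g (g' x) x) (hg' : ContinuousOn g' (Set.uIcc a b)) :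
    (g b - g a) ^ 2 ≤ (b - a) * ∫ x in a..b, g' x ^ 2 := by
  rcases hab.eq_or_lt with rfl | hlt
  · simp
  set D := g b - g a
  have hint : IntervalIntegrable g' volume a b := hg'.intervalIntegrable
  have hint2 : IntervalIntegrable (fun x => g' x ^ 2) volume a b := (hg'.pow 2).intervalIntegrable
  have hFTC : ∫ x in a..b, g' x = D := intervalIntegral.integral_eq_sub_of_hasDerivAt hg hint
  -- integrate `0 ≤ ((b - a) g' - D)²`
  have key : ∫ x in a..b, (2 * (b - a) * D * g' x - D ^ 2) ≤
      ∫ x in a..b, (b - a) ^ 2 * g' x ^ 2 :=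
    intervalIntegral.integral_mono_on hab ((hint.const_mul _).sub intervalIntegrable_const)
      (hint2.const_mul _) fun x _ => by nlinarith [sq_nonneg ((b - a) * g' x - D)]
  rw [intervalIntegral.integral_sub (hint.const_mul _) intervalIntegrable_const,
    intervalIntegral.integral_const_mul, intervalIntegral.integral_const_mul, hFTC,
    intervalIntegral.integral_const, smul_eq_mul] at key
  nlinarith

theorem sq_sub_le_mul_integral_sq_fderiv_line {E : Type*} [NormedAddCommGroup E]
    [NormedSpace ℝ E] {f : E → ℝ} (hf : ContDiff ℝ 1 f) (p v : E) {a b : ℝ} (hab : a ≤ b) :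
    (f (p + b • v) - f (p + a • v)) ^ 2 ≤
      (b - a) * ∫ t in a..b, fderiv ℝ f (p + t • v) v ^ 2 := by
  have hline (t : ℝ) : HasDerivAt (fun s : ℝ => p + s • v) v t := by
    simpa using ((hasDerivAt_id t).smul_const v).const_add p
  refine sq_sub_le_mul_integral_sq_deriv (g := fun t => f (p + t • v)) hab
    (fun t _ => (hf.differentiable one_ne_zero _).hasFDerivAt.comp_hasDerivAt t (hline t)) ?_
  exact (((hf.continuous_fderiv one_ne_zero).comp (by fun_prop)).clm_apply
    continuous_const).continuousOn

theorem arcsin_mem_Icc_of_abs_le_sin {θ y : ℝ} (hθ₁ : -(π / 2) ≤ θ) (hθ₂ : θ ≤ π / 2)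
    (hy : |y| ≤ Real.sin θ) : arcsin y ∈ Set.Icc (-θ) θ := by
  rw [abs_le] at hy
  constructor
  · calc -θ = arcsin (-Real.sin θ) := by rw [arcsin_neg, arcsin_sin hθ₁ hθ₂]
      _ ≤ arcsin y := arcsin_le_arcsin hy.1
  · calc arcsin y ≤ arcsin (Real.sin θ) := arcsin_le_arcsin hy.2
      _ = θ := arcsin_sin hθ₁ hθ₂

namespace Complex

variable {E : Type*} [NormedAddCommGroup E]

theorem integrable_prod_comp_add_mul_I {G : ℂ → E} (hG : Integrable G) :
    Integrable (fun p : ℝ × ℝ => G (p.1 + p.2 * I)) (volume.prod volume) := by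
  rw [← Measure.volume_eq_prod]
  simpa [Function.comp_def, measurableEquivRealProd_symm_apply, mk_eq_add_mul_I] using
    (volume_preserving_equiv_real_prod.symm.integrable_comp_emb
      (MeasurableEquiv.measurableEmbedding _)).2 hG

variable [NormedSpace ℝ E]

theorem integral_eq_integral_integral_add_mul_I {G : ℂ → E} (hG : Integrable G) :
    ∫ z, G z = ∫ y : ℝ, ∫ x : ℝ, G (x + y * I) := by
  rw [← volume_preserving_equiv_real_prod.symm.integral_comp', Measure.volume_eq_prod,
    ← integral_prod_symm _ (integrable_prod_comp_add_mul_I hG)]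
  simp [measurableEquivRealProd_symm_apply, mk_eq_add_mul_I]

theorem integrable_integral_add_mul_I {G : ℂ → E} (hG : Integrable G) :
    Integrable fun y : ℝ => ∫ x : ℝ, G (x + y * I) :=
  (integrable_prod_comp_add_mul_I hG).integral_prod_right

theorem mul_le_integral_of_le_integral_add_mul_I {G : ℂ → ℝ} (hG : Integrable G)
    (hG₀ : 0 ≤ G) {s : Set ℝ} (hs : MeasurableSet s) (hs' : volume s ≠ ⊤) {c : ℝ}
    (hc : ∀ y ∈ s, c ≤ ∫ x : ℝ, G (x + y * I)) :
    volume.real s * c ≤ ∫ z, G z := by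
  have hJ := integrable_integral_add_mul_I hG
  calc volume.real s * c = ∫ _ in s, c := by rw [setIntegral_const, smul_eq_mul]
    _ ≤ ∫ y in s, ∫ x : ℝ, G (x + y * I) :=
      setIntegral_mono_on (integrableOn_const hs') hJ.integrableOn hs hc
    _ ≤ ∫ y : ℝ, ∫ x : ℝ, G (x + y * I) :=
      setIntegral_le_integral hJ (.of_forall fun y => integral_nonneg fun x => hG₀ _)
    _ = ∫ z, G z := (integral_eq_integral_integral_add_mul_I hG).symm

theorem add_mul_I_mem_ball_zero_one_iff (x y : ℝ) :
    (x + y * I : ℂ) ∈ Metric.ball 0 1 ↔ x ∈ Set.Ioo (-√(1 - y ^ 2)) √(1 - y ^ 2) := by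
  rw [mem_ball_zero_iff, norm_add_mul_I, Real.sqrt_lt' one_pos, one_pow, ← lt_sub_iff_add_lt,
    ← sq_abs, ← Real.lt_sqrt (abs_nonneg x), abs_lt, Set.mem_Ioo]

theorem integral_indicator_ball_add_mul_I (G : ℂ → E) (y : ℝ) :
    ∫ x : ℝ, (Metric.ball (0 : ℂ) 1).indicator G (x + y * I) =
      ∫ x in Set.Ioo (-√(1 - y ^ 2)) √(1 - y ^ 2), G (x + y * I) := by
  rw [← integral_indicator measurableSet_Ioo]
  congr 1 with x
  by_cases hx : x ∈ Set.Ioo (-√(1 - y ^ 2)) √(1 - y ^ 2)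
  · rw [Set.indicator_of_mem hx,
      Set.indicator_of_mem ((add_mul_I_mem_ball_zero_one_iff x y).2 hx)]
  · rw [Set.indicator_of_notMem hx,
      Set.indicator_of_notMem (mt (add_mul_I_mem_ball_zero_one_iff x y).1 hx)]

theorem exp_arcsin_mul_I {y : ℝ} (h₁ : -1 ≤ y) (h₂ : y ≤ 1) :
    exp (arcsin y * I) = √(1 - y ^ 2) + y * I := by
  rw [exp_mul_I, ← ofReal_cos, ← ofReal_sin, Real.cos_arcsin, Real.sin_arcsin h₁ h₂]

theorem half_le_integral_sq_fderiv_chord {f : ℂ → ℝ} (hf : ContDiff ℝ 1 f) {y : ℝ}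
    (h₁ : f (√(1 - y ^ 2) + y * I) = 1) (h₀ : f (-√(1 - y ^ 2) + y * I) = 0) :
    1 / 2 ≤ ∫ x in Set.Ioo (-√(1 - y ^ 2)) √(1 - y ^ 2), fderiv ℝ f (x + y * I) 1 ^ 2 := by
  set b := √(1 - y ^ 2)
  have hb₀ : 0 ≤ b := Real.sqrt_nonneg _
  have hb₁ : b ≤ 1 := Real.sqrt_le_one.2 (by nlinarith)
  have hline (t : ℝ) : y * I + t • (1 : ℂ) = t + y * I := by simp [add_comm]
  have h := sq_sub_le_mul_integral_sq_fderiv_line hf (y * I) 1 (neg_le_self hb₀)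
  simp only [hline, ofReal_neg] at h
  rw [h₁, h₀, intervalIntegral.integral_of_le (neg_le_self hb₀),
    integral_Ioc_eq_integral_Ioo] at h
  set energy := ∫ x in Set.Ioo (-b) b, fderiv ℝ f (x + y * I) 1 ^ 2
  have henergy : 0 ≤ energy := by nlinarith
  nlinarith [mul_le_mul_of_nonneg_right hb₁ henergy]

theorem half_le_integral_sq_fderiv_chord_of_abs_le_sin {f : ℂ → ℝ} (hf : ContDiff ℝ 1 f)
    {θ : ℝ} (hθ₁ : -(π / 2) ≤ θ) (hθ₂ : θ ≤ π / 2)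
    (hE : ∀ s ∈ Set.Icc (-θ) θ, f (exp (s * I)) = 1)
    (hE' : ∀ s ∈ Set.Icc (-θ) θ, f (-exp (s * I)) = 0) {y : ℝ} (hy : |y| ≤ Real.sin θ) :
    1 / 2 ≤ ∫ x in Set.Ioo (-√(1 - y ^ 2)) √(1 - y ^ 2), fderiv ℝ f (x + y * I) 1 ^ 2 := by
  obtain ⟨hy_lo, hy_hi⟩ := abs_le.1 (hy.trans (Real.sin_le_one θ))
  apply half_le_integral_sq_fderiv_chord hf
  · simpa [exp_arcsin_mul_I hy_lo hy_hi] using hE _ (arcsin_mem_Icc_of_abs_le_sin hθ₁ hθ₂ hy)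
  · have h := hE' _ (arcsin_mem_Icc_of_abs_le_sin hθ₁ hθ₂ (y := -y) (by rwa [abs_neg]))
    rw [exp_arcsin_mul_I (by linarith) (by linarith), neg_sq] at h
    convert h using 2
    push_cast
    ring

end Complex

/-- Capacity-type lower bound: if `f : ℝ² ≅ ℂ → ℝ` is `C¹`, equal to `1` on
the arc `E = {e^{is} : |s| ≤ ℓ/2}` of the unit circle and to `0` on the
opposite arc `-E`, then the Dirichlet energy of `f` on the unit disk is at
least `sin (ℓ/2)`. -/
theorem dirichlet_energy_lower_bound
    (ℓ : ℝ) (hℓ : ℓ ∈ Set.Ioo 0 (π / 2))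
    (f : ℂ → ℝ) (hf : ContDiff ℝ 1 f)
    (hE : ∀ s ∈ Set.Icc (-(ℓ / 2)) (ℓ / 2),
      f (Complex.exp (s * Complex.I)) = 1)
    (hE' : ∀ s ∈ Set.Icc (-(ℓ / 2)) (ℓ / 2),
      f (-Complex.exp (s * Complex.I)) = 0) :
    Real.sin (ℓ / 2) ≤ ∫ z in Metric.ball (0 : ℂ) 1, ‖fderiv ℝ f z‖ ^ 2 := by
  obtain ⟨hℓ₀, hℓπ⟩ := hℓ
  set a := Real.sin (ℓ / 2)
  have ha₀ : 0 ≤ a := sin_nonneg_of_nonneg_of_le_pi (by linarith) (by linarith)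
  have hfd : Continuous (fderiv ℝ f) := hf.continuous_fderiv one_ne_zero
  have hball {g : ℂ → ℝ} (hg : Continuous g) : IntegrableOn g (Metric.ball 0 1) :=
    (hg.continuousOn.integrableOn_compact (isCompact_closedBall 0 1)).mono_set
      Metric.ball_subset_closedBall
  have hfd₁ : IntegrableOn (fun z => fderiv ℝ f z 1 ^ 2) (Metric.ball 0 1) :=
    hball ((hfd.clm_apply continuous_const).pow 2)
  set G := (Metric.ball (0 : ℂ) 1).indicator fun z => fderiv ℝ f z 1 ^ 2
  have hG : Integrable G := (integrable_indicator_iff measurableSet_ball).2 hfd₁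
  have hchord (y : ℝ) (hy : y ∈ Set.Icc (-a) a) : 1 / 2 ≤ ∫ x : ℝ, G (x + y * I) := by
    rw [integral_indicator_ball_add_mul_I]
    exact half_le_integral_sq_fderiv_chord_of_abs_le_sin hf (by linarith) (by linarith) hE hE'
      (abs_le.2 hy)
  calc a = volume.real (Set.Icc (-a) a) * (1 / 2) := by
        rw [Real.volume_real_Icc_of_le (by linarith)]; ring
    _ ≤ ∫ z, G z :=
      mul_le_integral_of_le_integral_add_mul_I hG (Set.indicator_nonneg fun z _ => sq_nonneg _)
        measurableSet_Icc measure_Icc_lt_top.ne hchord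
    _ = ∫ z in Metric.ball (0 : ℂ) 1, fderiv ℝ f z 1 ^ 2 := integral_indicator measurableSet_ball
    _ ≤ ∫ z in Metric.ball (0 : ℂ) 1, ‖fderiv ℝ f z‖ ^ 2 := by
      refine setIntegral_mono_on hfd₁ (hball (hfd.norm.pow 2)) measurableSet_ball fun z _ => ?_
      simpa [sq_abs] using pow_le_pow_left₀ (abs_nonneg _) ((fderiv ℝ f z).le_opNorm 1) 2
end

section
/- Let F : ℂ → ℂ be differentiable at every point with derivative F′(z) = exp(−sinh z) for all z ∈ ℂ. Then for every z ∈ ℂ, F(z + 2πi) − F(z) = i · ∫₀^{2π} exp(−i·sin s) ds; in particular this difference is a constant independent of z. -/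
open Real

/-! Since `sinh` is `2πi`-periodic, `z ↦ F (z + 2πi) - F z` has zero derivative, so it equals its
value at `0`, which the fundamental theorem of calculus along the imaginary axis computes using
`sinh (i t) = i sin t`. -/

theorem Function.Periodic.add_period_sub_eq_of_hasDerivAt {𝕜 E : Type*} [RCLike 𝕜]
    [NormedAddCommGroup E] [NormedSpace 𝕜 E] {F f : 𝕜 → E} {c : 𝕜} (hf : Function.Periodic f c)
    (hF : ∀ z, HasDerivAt F (f z) z) (z w : 𝕜) :
    F (z + c) - F z = F (w + c) - F w := by
  have hderiv : ∀ x, HasDerivAt (fun y => F (y + c) - F y) 0 x := fun x => by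
    simpa [hf x] using ((hF (x + c)).comp_add_const x c).fun_sub (hF x)
  exact is_const_of_deriv_eq_zero (fun x => (hderiv x).differentiableAt)
    (fun x => (hderiv x).deriv) z w

theorem sub_eq_I_smul_integral_of_hasDerivAt {E : Type*} [NormedAddCommGroup E]
    [NormedSpace ℂ E] [CompleteSpace E] {F f : ℂ → E} (hF : ∀ z, HasDerivAt F (f z) z)
    (hf : Continuous f) (a b : ℝ) :
    F (b * Complex.I) - F (a * Complex.I) =
      Complex.I • ∫ t in a..b, f (t * Complex.I) := by
  have hline : ∀ t : ℝ, HasDerivAt (fun t : ℝ => (t : ℂ) * Complex.I) Complex.I t := fun t => by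
    simpa using (Complex.ofRealCLM.hasDerivAt (x := t)).mul_const Complex.I
  have hcont : Continuous fun t : ℝ => Complex.I • f (t * Complex.I) := by fun_prop
  rw [← intervalIntegral.integral_smul]
  exact (intervalIntegral.integral_eq_sub_of_hasDerivAt (fun t _ => (hF _).scomp t (hline t))
    (hcont.intervalIntegrable _ _)).symm

/-- If `F' (z) = exp (-sinh z)` everywhere, then
`F (z + 2πi) - F z = i ∫₀^{2π} exp (-i sin s) ds`, a constant independent
of `z`. -/
theorem period_of_antiderivative
    (F : ℂ → ℂ)
    (hF : ∀ z : ℂ, HasDerivAt F (Complex.exp (-Complex.sinh z)) z) :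
    ∀ z : ℂ, F (z + 2 * π * Complex.I) - F z =
      Complex.I * ∫ s in (0:ℝ)..(2 * π),
        Complex.exp (-(Complex.I * Real.sin s)) := by
  intro z
  have hperiodic :
      Function.Periodic (fun z => Complex.exp (-Complex.sinh z)) (2 * π * Complex.I) :=
    Complex.sinh_periodic.comp fun w => Complex.exp (-w)
  have hsinh : ∀ t : ℝ, Complex.sinh (t * Complex.I) = Complex.I * Real.sin t := fun t => by
    rw [Complex.sinh_mul_I, Complex.ofReal_sin, mul_comm]
  have hFTC := sub_eq_I_smul_integral_of_hasDerivAt hF (by fun_prop) 0 (2 * π)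
  simp only [hsinh, smul_eq_mul, Complex.ofReal_zero, zero_mul, Complex.ofReal_mul,
    Complex.ofReal_ofNat] at hFTC
  rw [hperiodic.add_period_sub_eq_of_hasDerivAt hF z 0, zero_add, hFTC]
end
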